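/- Let A, u : ℝ × ℝ³ → ℝ³ and ψ : ℝ × ℝ³ → ℝ be C² fields, σ > 0 a constant (conductivity), B = ∇×A, J = ∇×B (current density in units with μ₀ = 1), and suppose the resistive Ohm's law form of Faraday's law ∂A/∂t + E + ∇ψ = 0 with E = −u×B + J/σ holds. Then ∂(A·B)/∂t + ∇·[ u (A·B) + (ψ − A·u) B + (J×A)/σ ] = −2 (J·B)/σ. -/

import Mathlib

/-! Ohm's law and Faraday's law together say `J/σ = u×B − ∂ₜA − ∇ψ`. Substituting this, the
flux loses its dependence on `u`: by `(u×B)×A = (A·u)B − (A·B)u` it becomes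
`ψB + A×∇ψ + A×∂ₜA`, and since `u×B ⟂ B` the source is `−2J·B/σ = 2(∂ₜA + ∇ψ)·B`.
The divergence of the new flux follows from `∇·(ψB) = ∇ψ·B + ψ∇·B`,
`∇·(A×C) = C·(∇×A) − A·(∇×C)`, `∇·∇×A = 0`, `∇×∇ψ = 0` and `∇×∂ₜA = ∂ₜB`, the last three by
symmetry of second derivatives of `C²` fields; it equals `2∇ψ·B + ∂ₜA·B − A·∂ₜB`, and adding
`∂ₜ(A·B) = ∂ₜA·B + A·∂ₜB` gives `2(∂ₜA + ∇ψ)·B`. -/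

noncomputable section

/-- Vectors in ℝ³. -/
abbrev V3 := Fin 3 → ℝ

/-- Euclidean dot product on ℝ³. -/
def dot3 (a b : V3) : ℝ := a 0 * b 0 + a 1 * b 1 + a 2 * b 2

/-- Cross product on ℝ³. -/
def cross3 (a b : V3) : V3 :=
  ![a 1 * b 2 - a 2 * b 1, a 2 * b 0 - a 0 * b 2, a 0 * b 1 - a 1 * b 0]

/-- Euclidean norm on ℝ³. -/
def norm3 (a : V3) : ℝ := Real.sqrt (dot3 a a)

/-- Spatial partial derivative of a time-dependent scalar field. -/
def pdS (i : Fin 3) (f : ℝ × V3 → ℝ) (p : ℝ × V3) : ℝ :=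
  fderiv ℝ (fun x => f (p.1, x)) p.2 (Pi.single i 1)

/-- Spatial gradient of a time-dependent scalar field. -/
def gradS (f : ℝ × V3 → ℝ) (p : ℝ × V3) : V3 := fun i => pdS i f p

/-- Spatial divergence of a time-dependent vector field. -/
def divS (F : ℝ × V3 → V3) (p : ℝ × V3) : ℝ :=
  pdS 0 (fun q => F q 0) p + pdS 1 (fun q => F q 1) p + pdS 2 (fun q => F q 2) p

/-- Spatial curl of a time-dependent vector field. -/
def curlS (F : ℝ × V3 → V3) (p : ℝ × V3) : V3 :=
  ![pdS 1 (fun q => F q 2) p - pdS 2 (fun q => F q 1) p,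
    pdS 2 (fun q => F q 0) p - pdS 0 (fun q => F q 2) p,
    pdS 0 (fun q => F q 1) p - pdS 1 (fun q => F q 0) p]

/-- Time partial derivative of a scalar field. -/
def dtS (f : ℝ × V3 → ℝ) (p : ℝ × V3) : ℝ := deriv (fun t => f (t, p.2)) p.1

/-- Time partial derivative of a vector field. -/
def dtV (F : ℝ × V3 → V3) (p : ℝ × V3) : V3 := deriv (fun t => F (t, p.2)) p.1

/-- Fluid shear tensor `σ_ij = ½(∂u_i/∂x_j + ∂u_j/∂x_i) − (1/3) δ_ij ∇·u`. -/
def shearS (u : ℝ × V3 → V3) (p : ℝ × V3) : Fin 3 → Fin 3 → ℝ :=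
  fun i j => (1 / 2) * (pdS j (fun q => u q i) p + pdS i (fun q => u q j) p)
    - (1 / 3) * (if i = j then (1 : ℝ) else 0) * divS u p

/-- Matrix–vector product `(m·v)_i = Σ_j m_ij v_j`. -/
def matVec (m : Fin 3 → Fin 3 → ℝ) (v : V3) : V3 := fun i => ∑ j : Fin 3, m i j * v j

/-- Quadratic form `a·m·b = Σ_{i,j} a_i m_ij b_j`. -/
def quad3 (a : V3) (m : Fin 3 → Fin 3 → ℝ) (b : V3) : ℝ :=
  ∑ i : Fin 3, ∑ j : Fin 3, a i * m i j * b j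

/-- Directional derivative `(v·∇)F` in the spatial variables. -/
def dirDS (v : V3) (F : ℝ × V3 → V3) (p : ℝ × V3) : V3 :=
  fun i => v 0 * pdS 0 (fun q => F q i) p + v 1 * pdS 1 (fun q => F q i) p
    + v 2 * pdS 2 (fun q => F q i) p

theorem fderiv_fderiv_apply_comm {E F : Type*} [NormedAddCommGroup E] [NormedSpace ℝ E]
    [NormedAddCommGroup F] [NormedSpace ℝ F] {f : E → F} (hf : ContDiff ℝ 2 f) (x v w : E) :
    fderiv ℝ (fun y => fderiv ℝ f y w) x v = fderiv ℝ (fun y => fderiv ℝ f y v) x w := by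
  have hdf : DifferentiableAt ℝ (fderiv ℝ f) x :=
    (hf.fderiv_right (m := 1) le_rfl).differentiable one_ne_zero x
  simpa [fderiv_clm_apply hdf (differentiableAt_const _)] using
    hf.contDiffAt.isSymmSndFDerivAt (by simp) v w

section Slices

variable {f g : ℝ × V3 → ℝ} {p : ℝ × V3}

theorem pdS_eq_fderiv (hf : DifferentiableAt ℝ f p) (i : Fin 3) :
    pdS i f p = fderiv ℝ f p (0, Pi.single i 1) := by
  have hslice : HasFDerivAt (fun x : V3 => (p.1, x)) ((0 : V3 →L[ℝ] ℝ).prod (.id ℝ V3)) p.2 :=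
    (hasFDerivAt_const p.1 p.2).prodMk (hasFDerivAt_id p.2)
  have hf' : HasFDerivAt f (fderiv ℝ f p) (p.1, p.2) := hf.hasFDerivAt
  have hcomp : HasFDerivAt (fun x => f (p.1, x)) _ p.2 := hf'.comp p.2 hslice
  simp [pdS, hcomp.fderiv]

theorem dtS_eq_fderiv (hf : DifferentiableAt ℝ f p) : dtS f p = fderiv ℝ f p (1, 0) := by
  have hline : HasDerivAt (fun t : ℝ => (t, p.2)) ((1 : ℝ), (0 : V3)) p.1 :=
    (hasDerivAt_id p.1).prodMk (hasDerivAt_const p.1 p.2)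
  exact (hf.hasFDerivAt.comp_hasDerivAt p.1 hline).deriv

theorem ContDiff.pdS {n : WithTop ℕ∞} (hf : ContDiff ℝ (n + 1) f) (i : Fin 3) :
    ContDiff ℝ n (_root_.pdS i f) := by
  have hd : Differentiable ℝ f := hf.differentiable (by simp)
  rw [show _root_.pdS i f = fun q => fderiv ℝ f q (0, Pi.single i 1) from
    funext fun q => pdS_eq_fderiv (hd q) i]
  exact (hf.fderiv_right le_rfl).clm_apply contDiff_const

theorem ContDiff.dtS {n : WithTop ℕ∞} (hf : ContDiff ℝ (n + 1) f) :
    ContDiff ℝ n (_root_.dtS f) := by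
  have hd : Differentiable ℝ f := hf.differentiable (by simp)
  rw [show _root_.dtS f = fun q => fderiv ℝ f q (1, 0) from funext fun q => dtS_eq_fderiv (hd q)]
  exact (hf.fderiv_right le_rfl).clm_apply contDiff_const

theorem pdS_add (hf : DifferentiableAt ℝ f p) (hg : DifferentiableAt ℝ g p) (i : Fin 3) :
    pdS i (fun q => f q + g q) p = pdS i f p + pdS i g p := by
  rw [pdS_eq_fderiv (f := fun q => f q + g q) (hf.add hg) i, pdS_eq_fderiv hf i,
    pdS_eq_fderiv hg i, fderiv_fun_add hf hg]
  simp

theorem pdS_sub (hf : DifferentiableAt ℝ f p) (hg : DifferentiableAt ℝ g p) (i : Fin 3) :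
    pdS i (fun q => f q - g q) p = pdS i f p - pdS i g p := by
  rw [pdS_eq_fderiv (f := fun q => f q - g q) (hf.sub hg) i, pdS_eq_fderiv hf i,
    pdS_eq_fderiv hg i, fderiv_fun_sub hf hg]
  simp

theorem pdS_mul (hf : DifferentiableAt ℝ f p) (hg : DifferentiableAt ℝ g p) (i : Fin 3) :
    pdS i (fun q => f q * g q) p = pdS i f p * g p + f p * pdS i g p := by
  rw [pdS_eq_fderiv (f := fun q => f q * g q) (hf.mul hg) i, pdS_eq_fderiv hf i,
    pdS_eq_fderiv hg i, fderiv_fun_mul hf hg]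
  simp only [add_apply, smul_apply, smul_eq_mul]
  ring

theorem dtS_add (hf : DifferentiableAt ℝ f p) (hg : DifferentiableAt ℝ g p) :
    dtS (fun q => f q + g q) p = dtS f p + dtS g p := by
  rw [dtS_eq_fderiv (f := fun q => f q + g q) (hf.add hg), dtS_eq_fderiv hf, dtS_eq_fderiv hg,
    fderiv_fun_add hf hg]
  simp

theorem dtS_sub (hf : DifferentiableAt ℝ f p) (hg : DifferentiableAt ℝ g p) :
    dtS (fun q => f q - g q) p = dtS f p - dtS g p := by
  rw [dtS_eq_fderiv (f := fun q => f q - g q) (hf.sub hg), dtS_eq_fderiv hf, dtS_eq_fderiv hg,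
    fderiv_fun_sub hf hg]
  simp

theorem dtS_mul (hf : DifferentiableAt ℝ f p) (hg : DifferentiableAt ℝ g p) :
    dtS (fun q => f q * g q) p = dtS f p * g p + f p * dtS g p := by
  rw [dtS_eq_fderiv (f := fun q => f q * g q) (hf.mul hg), dtS_eq_fderiv hf, dtS_eq_fderiv hg,
    fderiv_fun_mul hf hg]
  simp only [add_apply, smul_apply, smul_eq_mul]
  ring

theorem pdS_pdS_comm (hf : ContDiff ℝ 2 f) (i j : Fin 3) (p : ℝ × V3) :
    pdS i (pdS j f) p = pdS j (pdS i f) p := by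
  have hd : Differentiable ℝ f := hf.differentiable two_ne_zero
  rw [pdS_eq_fderiv (((hf.pdS j).differentiable one_ne_zero) p),
    pdS_eq_fderiv (((hf.pdS i).differentiable one_ne_zero) p),
    show pdS j f = _ from funext fun q => pdS_eq_fderiv (hd q) j,
    show pdS i f = _ from funext fun q => pdS_eq_fderiv (hd q) i]
  exact fderiv_fderiv_apply_comm hf _ _ _

theorem pdS_dtS_comm (hf : ContDiff ℝ 2 f) (i : Fin 3) (p : ℝ × V3) :
    pdS i (dtS f) p = dtS (pdS i f) p := by
  have hd : Differentiable ℝ f := hf.differentiable two_ne_zero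
  rw [pdS_eq_fderiv (((hf.dtS).differentiable one_ne_zero) p),
    dtS_eq_fderiv (((hf.pdS i).differentiable one_ne_zero) p),
    show dtS f = _ from funext fun q => dtS_eq_fderiv (hd q),
    show pdS i f = _ from funext fun q => pdS_eq_fderiv (hd q) i]
  exact fderiv_fderiv_apply_comm hf _ _ _

end Slices

section Fields

variable {f : ℝ × V3 → ℝ} {F G : ℝ × V3 → V3} {p : ℝ × V3}

theorem dtV_apply (hF : DifferentiableAt ℝ F p) (i : Fin 3) :
    dtV F p i = dtS (fun q => F q i) p := by
  have hline : DifferentiableAt ℝ (fun t : ℝ => F (t, p.2)) p.1 :=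
    DifferentiableAt.comp (f := fun t : ℝ => (t, p.2)) p.1 hF (by fun_prop)
  rw [dtV, deriv_pi (differentiableAt_pi.1 hline)]
  rfl

theorem ContDiff.gradS {n : WithTop ℕ∞} (hf : ContDiff ℝ (n + 1) f) :
    ContDiff ℝ n (_root_.gradS f) :=
  contDiff_pi.2 hf.pdS

theorem ContDiff.curlS {n : WithTop ℕ∞} (hF : ContDiff ℝ (n + 1) F) :
    ContDiff ℝ n (_root_.curlS F) := by
  have h i j : ContDiff ℝ n (_root_.pdS i fun q => F q j) := (contDiff_pi.1 hF j).pdS i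
  refine contDiff_pi.2 fun i => ?_
  fin_cases i
  exacts [(h 1 2).sub (h 2 1), (h 2 0).sub (h 0 2), (h 0 1).sub (h 1 0)]

theorem ContDiff.dtV {n : WithTop ℕ∞} (hF : ContDiff ℝ (n + 1) F) :
    ContDiff ℝ n (_root_.dtV F) := by
  have hd : Differentiable ℝ F := hF.differentiable (by simp)
  rw [show _root_.dtV F = fun q i => _root_.dtS (fun r => F r i) q from
    funext fun q => funext (dtV_apply (hd q))]
  exact contDiff_pi.2 fun i => (contDiff_pi.1 hF i).dtS

@[fun_prop]
theorem DifferentiableAt.cross3 (hF : DifferentiableAt ℝ F p) (hG : DifferentiableAt ℝ G p) :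
    DifferentiableAt ℝ (fun q => _root_.cross3 (F q) (G q)) p := by
  have hF' := differentiableAt_pi.1 hF
  have hG' := differentiableAt_pi.1 hG
  refine differentiableAt_pi.2 fun i => ?_
  fin_cases i <;>
    simp only [_root_.cross3, Fin.zero_eta, Fin.mk_one, Fin.reduceFinMk, Matrix.cons_val_zero,
      Matrix.cons_val_one, Matrix.cons_val] <;>
    fun_prop

end Fields

section Identities

variable {f : ℝ × V3 → ℝ} {F G : ℝ × V3 → V3} {p : ℝ × V3}

theorem divS_add (hF : DifferentiableAt ℝ F p) (hG : DifferentiableAt ℝ G p) :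
    divS (fun q => F q + G q) p = divS F p + divS G p := by
  simp (disch := fun_prop) only [divS, Pi.add_apply, pdS_add]
  ring

theorem divS_smul (hf : DifferentiableAt ℝ f p) (hF : DifferentiableAt ℝ F p) :
    divS (fun q => f q • F q) p = dot3 (gradS f p) (F p) + f p * divS F p := by
  simp (disch := fun_prop) only [divS, dot3, gradS, Pi.smul_apply, smul_eq_mul, pdS_mul]
  ring

theorem divS_cross3 (hF : DifferentiableAt ℝ F p) (hG : DifferentiableAt ℝ G p) :
    divS (fun q => cross3 (F q) (G q)) p = dot3 (G p) (curlS F p) - dot3 (F p) (curlS G p) := by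
  simp (disch := fun_prop) only [divS, dot3, curlS, cross3, Matrix.cons_val_zero,
    Matrix.cons_val_one, Matrix.cons_val_two, Matrix.head_cons, Matrix.tail_cons, pdS_sub, pdS_mul]
  ring

theorem divS_curlS (hF : ContDiff ℝ 2 F) (p : ℝ × V3) : divS (curlS F) p = 0 := by
  have hF' i : ContDiff ℝ 2 fun q => F q i := contDiff_pi.1 hF i
  have hd i j : DifferentiableAt ℝ (pdS i fun q => F q j) p :=
    ((hF' j).pdS i).differentiable one_ne_zero p
  simp only [divS, curlS, Matrix.cons_val_zero, Matrix.cons_val_one,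
    Matrix.cons_val_two, Matrix.head_cons, Matrix.tail_cons, pdS_sub (hd _ _) (hd _ _)]
  rw [pdS_pdS_comm (hF' 0) 1 2, pdS_pdS_comm (hF' 1) 0 2, pdS_pdS_comm (hF' 2) 0 1]
  ring

theorem curlS_gradS (hf : ContDiff ℝ 2 f) (p : ℝ × V3) : curlS (gradS f) p = 0 := by
  ext i
  fin_cases i <;> simp [curlS, gradS, pdS_pdS_comm hf]

theorem dtV_curlS (hF : ContDiff ℝ 2 F) (p : ℝ × V3) : dtV (curlS F) p = curlS (dtV F) p := by
  have hF' i : ContDiff ℝ 2 fun q => F q i := contDiff_pi.1 hF i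
  have hd i j : DifferentiableAt ℝ (pdS i fun q => F q j) p :=
    ((hF' j).pdS i).differentiable one_ne_zero p
  have hdtV : ∀ i, (fun q => dtV F q i) = dtS fun q => F q i :=
    fun i => funext fun q => dtV_apply ((hF.differentiable two_ne_zero) q) i
  ext i
  rw [dtV_apply ((hF.curlS.differentiable one_ne_zero) p)]
  fin_cases i <;>
    simp [curlS, hdtV, dtS_sub (hd _ _) (hd _ _), pdS_dtS_comm (hF' _)]

theorem dtS_dot3 (hF : DifferentiableAt ℝ F p) (hG : DifferentiableAt ℝ G p) :
    dtS (fun q => dot3 (F q) (G q)) p = dot3 (dtV F p) (G p) + dot3 (F p) (dtV G p) := by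
  simp (disch := fun_prop) only [dot3, dtV_apply hF, dtV_apply hG, dtS_add, dtS_mul]
  ring

end Identities

theorem dot3_smul_left (s : ℝ) (a b : V3) : dot3 (s • a) b = s * dot3 a b := by
  simp only [dot3, Pi.smul_apply, smul_eq_mul]
  ring

open scoped Matrix in
theorem cross3_eq_crossProduct (a b : V3) : cross3 a b = a ⨯₃ b := rfl

theorem dot3_eq_dotProduct (a b : V3) : dot3 a b = a ⬝ᵥ b := (Matrix.vec3_dotProduct a b).symm

theorem helicity_flux_of_ohm {a b u e g j : V3} {ψ s : ℝ} (hj : s • j = cross3 u b - e - g) :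
    dot3 a b • u + (ψ - dot3 a u) • b + s • cross3 j a = ψ • b + cross3 a g + cross3 a e := by
  simp only [cross3_eq_crossProduct, dot3_eq_dotProduct] at hj ⊢
  rw [← LinearMap.map_smul₂, hj, map_sub, map_sub, LinearMap.sub_apply, LinearMap.sub_apply,
    cross_cross_eq_smul_sub_smul, ← cross_anticomm e, ← cross_anticomm g, dotProduct_comm u a,
    dotProduct_comm b a]
  module

theorem helicity_dissipation_of_ohm {b u e g j : V3} {s : ℝ} (hj : s • j = cross3 u b - e - g) :
    s * dot3 j b = -(dot3 e b + dot3 g b) := by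
  rw [← dot3_smul_left, hj]
  simp only [dot3_eq_dotProduct, cross3_eq_crossProduct, dotProduct_comm _ b, dotProduct_sub,
    dot_cross_self]
  ring

theorem resistive_magnetic_helicity_transport_general
    (A u : ℝ × V3 → V3) (ψ : ℝ × V3 → ℝ) (σ : ℝ)
    (hA : ContDiff ℝ 2 A) (hψ : ContDiff ℝ 2 ψ)
    (B J E : ℝ × V3 → V3)
    (hB : ∀ p, B p = curlS A p)
    (hE : ∀ p, E p = -cross3 (u p) (B p) + σ⁻¹ • J p)
    (hFaraday : ∀ p, dtV A p + E p + gradS ψ p = 0) :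
    ∀ p : ℝ × V3,
      dtS (fun q => dot3 (A q) (B q)) p
        + divS (fun q => dot3 (A q) (B q) • u q + (ψ q - dot3 (A q) (u q)) • B q
            + σ⁻¹ • cross3 (J q) (A q)) p
        = -2 * dot3 (J p) (B p) / σ := by
  obtain rfl : B = curlS A := funext hB
  have hOhm q : σ⁻¹ • J q = cross3 (u q) (curlS A q) - dtV A q - gradS ψ q := by
    have h := hFaraday q
    rw [hE q] at h
    linear_combination (norm := module) h
  have hflux : (fun q => dot3 (A q) (curlS A q) • u q + (ψ q - dot3 (A q) (u q)) • curlS A q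
      + σ⁻¹ • cross3 (J q) (A q))
      = fun q => ψ q • curlS A q + cross3 (A q) (gradS ψ q) + cross3 (A q) (dtV A q) :=
    funext fun q => helicity_flux_of_ohm (hOhm q)
  intro p
  have hA' := hA.differentiable two_ne_zero p
  have hB' := hA.curlS.differentiable one_ne_zero p
  have hψ' := hψ.differentiable two_ne_zero p
  have hgrad := hψ.gradS.differentiable one_ne_zero p
  have hdt := hA.dtV.differentiable one_ne_zero p
  rw [hflux, dtS_dot3 hA' hB']
  simp (disch := fun_prop) only [divS_add, divS_smul, divS_cross3]
  rw [divS_curlS hA, curlS_gradS hψ, ← dtV_curlS hA, mul_div_assoc, div_eq_inv_mul,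
    helicity_dissipation_of_ohm (hOhm p)]
  simp only [dot3, Pi.zero_apply]
  ring

/-- resistive magnetic helicity transport equation
`∂(A·B)/∂t + ∇·[u(A·B) + (ψ − A·u)B + (J×A)/σ] = −2(J·B)/σ`. -/
theorem resistive_magnetic_helicity_transport
    (A u : ℝ × V3 → V3) (ψ : ℝ × V3 → ℝ) (σ : ℝ) (hσ : 0 < σ)
    (hA : ContDiff ℝ 2 A) (hu : ContDiff ℝ 2 u) (hψ : ContDiff ℝ 2 ψ)
    (B J E : ℝ × V3 → V3)
    (hB : ∀ p, B p = curlS A p) (hJ : ∀ p, J p = curlS B p)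
    (hE : ∀ p, E p = -cross3 (u p) (B p) + σ⁻¹ • J p)
    (hFaraday : ∀ p, dtV A p + E p + gradS ψ p = 0) :
    ∀ p : ℝ × V3,
      dtS (fun q => dot3 (A q) (B q)) p
        + divS (fun q => dot3 (A q) (B q) • u q + (ψ q - dot3 (A q) (u q)) • B q
            + σ⁻¹ • cross3 (J q) (A q)) p
        = -2 * dot3 (J p) (B p) / σ :=
  resistive_magnetic_helicity_transport_general A u ψ σ hA hψ B J E hB hE hFaraday
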